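/- Let (N(t), t ≥ 0) be nonnegative integer-valued random variables, Z an almost surely positive random variable, c : [0,∞) → (0,∞) with c(t) → ∞, and suppose N(t)/c(t) → Z almost surely. Let X₁, X₂, … be a strictly stationary and ergodic sequence with essential supremum +∞, (kₙ) integers with 1 ≤ kₙ ≤ n, kₙ/n → 1, and a > 0. Then Σ_{i=1}^{N(t)} 1{X_{k_{N(t)}:N(t)} − a < X_i < X_{k_{N(t)}:N(t)}} / c(t) → 0 almost surely as t → ∞. -/

import Mathlib

/-!
Ergodicity of the shift, through the maximal ergodic theorem, gives the pointwise ergodic theorem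
for bounded functions; applied to indicators it says that the empirical distribution function of
`X₁, …, Xₙ` converges a.s. to `F(r) = P(X₁ ≤ r)` at every fixed level `r`. Since `F < 1`
everywhere and `kₙ / n → 1`, the `kₙ`-th order statistic eventually exceeds any level `m`, so the
observations in its left `a`-neighbourhood all lie above `m - a`; their proportion is eventually
close to `1 - F(m - a)`, which is small for large `m`. At the random sample size, the count over
`c(t)` is `(K / N(t)) · (N(t) / c(t))` with `N(t) → ∞` and `N(t) / c(t) → Z`.
-/

open MeasureTheory Filter Set
open scoped Topology ENNReal

noncomputable section

/-- The shift map on real sequences. -/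
def seqShift (y : ℕ → ℝ) : ℕ → ℝ := fun n => y (n + 1)

/-- The path map associating to each sample point the sequence of observations. -/
def path {Ω : Type*} (X : ℕ → Ω → ℝ) (ω : Ω) : ℕ → ℝ := fun n => X n ω

/-- The `k`-th smallest value (k counted from 1) among `x 0, …, x (n-1)`. -/
def ordStat (k n : ℕ) (x : ℕ → ℝ) : ℝ :=
  ((List.ofFn (fun i : Fin n => x i)).insertionSort (· ≤ ·)).getD (k - 1) 0

/-- Number of observations among `x 0, …, x (n-1)` in the left `a`-neighborhood of the
`k`-th order statistic. -/
def nearCount (k n : ℕ) (a : ℝ) (x : ℕ → ℝ) : ℕ :=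
  ((Finset.range n).filter
    (fun i => ordStat k n x - a < x i ∧ x i < ordStat k n x)).card

/-- Sum of observations among `x 0, …, x (n-1)` in the left `a`-neighborhood of the
`k`-th order statistic. -/
def nearSum (k n : ℕ) (a : ℝ) (x : ℕ → ℝ) : ℝ :=
  ∑ i ∈ Finset.range n,
    if ordStat k n x - a < x i ∧ x i < ordStat k n x then x i else 0

/-- The right endpoint `sup {x : P(X ≤ x) < 1}` of the support of `X`, as an extended real. -/
def rightEndpoint {Ω : Type*} [MeasurableSpace Ω] (μ : Measure Ω) (X : Ω → ℝ) : EReal :=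
  sSup ((fun r : ℝ => (r : EReal)) '' {r : ℝ | μ {ω | X ω ≤ r} < 1})

open Finset

lemma card_filter_range_eq_countP_ofFn {α : Type*} (x : ℕ → α) (p : α → Prop) [DecidablePred p]
    (n : ℕ) : #{i ∈ range n | p (x i)} = (List.ofFn fun i : Fin n => x i).countP (p ·) := by
  rw [card_filter, sum_range fun i => if p (x i) then 1 else 0]
  induction n with
  | zero => simp
  | succ n ih =>
    rw [Fin.sum_univ_castSucc, List.ofFn_succ', List.concat_eq_append, List.countP_append]
    simp only [Fin.val_castSucc, ih]
    simp

theorem lt_ordStat_of_card_lt {k n : ℕ} {x : ℕ → ℝ} {M : ℝ} (hk : 1 ≤ k) (hkn : k ≤ n)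
    (hM : #{i ∈ range n | x i ≤ M} < k) : M < ordStat k n x := by
  by_contra! h
  set s := (List.ofFn fun i : Fin n => x i).insertionSort (· ≤ ·)
  have hlen : s.length = n := by simp [s]
  have hk' : k - 1 < s.length := by omega
  have hsorted : s.Pairwise (· ≤ ·) := List.pairwise_insertionSort _ _
  have htake : ∀ v ∈ s.take k, decide (v ≤ M) = true := by
    intro v hv
    obtain ⟨i, hi, rfl⟩ := List.mem_iff_getElem.mp hv
    rw [List.length_take] at hi
    rw [List.getElem_take, decide_eq_true_iff]
    calc s[i] ≤ s[k - 1] := hsorted.rel_get_of_le (a := ⟨i, by omega⟩) (b := ⟨k - 1, hk'⟩) (by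
            show i ≤ k - 1; omega)
      _ = ordStat k n x := (List.getD_eq_getElem _ _ hk').symm
      _ ≤ M := h
  have hcount : k ≤ s.countP (· ≤ M) :=
    calc k = (s.take k).countP (· ≤ M) := by rw [List.countP_eq_length.2 htake]; simp; omega
      _ ≤ s.countP (· ≤ M) := (List.take_sublist k s).countP_le
  have hperm : s.countP (· ≤ M) = #{i ∈ range n | x i ≤ M} := by
    rw [card_filter_range_eq_countP_ofFn x (· ≤ M)]
    exact (List.perm_insertionSort _ _).countP_eq _
  omega

theorem nearCount_add_card_le {k n : ℕ} {a M : ℝ} {x : ℕ → ℝ} (hk : 1 ≤ k) (hkn : k ≤ n)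
    (hM : #{i ∈ range n | x i ≤ M} < k) :
    nearCount k n a x + #{i ∈ range n | x i ≤ M - a} ≤ n := by
  have hord := lt_ordStat_of_card_lt hk hkn hM
  have hnear : nearCount k n a x ≤ #{i ∈ range n | ¬ x i ≤ M - a} :=
    card_le_card <| monotone_filter_right _ fun i _ hi => by linarith [hi.1]
  have := card_filter_add_card_filter_not (s := range n) (p := fun i => x i ≤ M - a)
  rw [card_range] at this
  omega

def empiricalCDF (x : ℕ → ℝ) (n : ℕ) (r : ℝ) : ℝ := #{i ∈ range n | x i ≤ r} / n

theorem tendsto_nearCount_div_of_tendsto_empiricalCDF {x : ℕ → ℝ} {F : ℝ → ℝ} {a : ℝ}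
    {k : ℕ → ℕ} (hk : ∀ n, 1 ≤ n → 1 ≤ k n ∧ k n ≤ n)
    (hk1 : Tendsto (fun n => (k n : ℝ) / n) atTop (𝓝 1))
    (hF : ∀ r, F r < 1) (hF1 : Tendsto F atTop (𝓝 1))
    (hx : ∀ m : ℕ, Tendsto (empiricalCDF x · m) atTop (𝓝 (F m)))
    (hx' : ∀ m : ℕ, Tendsto (empiricalCDF x · (m - a)) atTop (𝓝 (F (m - a)))) :
    Tendsto (fun n => (nearCount (k n) n a x : ℝ) / n) atTop (𝓝 0) := by
  refine tendsto_order.2 ⟨fun b hb => .of_forall fun n => hb.trans_le (by positivity),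
    fun b hb => ?_⟩
  obtain ⟨m, hm⟩ : ∃ m : ℕ, 1 - b < F (m - a) :=
    ((hF1.comp (tendsto_atTop_add_const_right _ (-a) tendsto_natCast_atTop_atTop)).eventually
      (lt_mem_nhds (by linarith))).exists
  filter_upwards [(hx m).eventually_lt hk1 (hF m), (hx' m).eventually (lt_mem_nhds hm),
    eventually_ge_atTop 1] with n hfew hmany hn
  have hn0 : (0 : ℝ) < n := by exact_mod_cast hn
  obtain ⟨hk1n, hkn⟩ := hk n hn
  rw [empiricalCDF, div_lt_div_iff_of_pos_right hn0] at hfew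
  rw [empiricalCDF, lt_div_iff₀ hn0] at hmany
  have hcount : (nearCount (k n) n a x : ℝ) + #{i ∈ range n | x i ≤ m - a} ≤ n := by
    exact_mod_cast nearCount_add_card_le hk1n hkn (by exact_mod_cast hfew)
  rw [div_lt_iff₀ hn0]
  linarith

section Birkhoff

variable {α : Type*} {T : α → α} {f : α → ℝ}

lemma birkhoffSum_sub_const (T : α → α) (f : α → ℝ) (c : ℝ) (n : ℕ) (x : α) :
    birkhoffSum T (fun y => f y - c) n x = birkhoffSum T f n x - n * c := by
  simp [birkhoffSum, sum_sub_distrib]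

lemma bddAbove_range_birkhoffSum_comp_iff (T : α → α) (f : α → ℝ) (x : α) :
    BddAbove (Set.range fun n => birkhoffSum T f n (T x)) ↔
      BddAbove (Set.range fun n => birkhoffSum T f n x) := by
  simp only [bddAbove_def, Set.forall_mem_range]
  constructor
  · rintro ⟨B, hB⟩
    refine ⟨max 0 (f x + B), fun n => ?_⟩
    cases n with
    | zero => simp
    | succ n => exact birkhoffSum_succ' T f n x ▸ le_max_of_le_right (by linarith [hB n])
  · rintro ⟨B, hB⟩
    exact ⟨B - f x, fun n => by linarith [hB (n + 1), birkhoffSum_succ' T f n x]⟩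

/-- Since `S₀ = 0`, this is `max (0, S₁ x, …, Sₙ x)`, the function of the maximal ergodic
theorem. -/
def birkhoffMax (T : α → α) (f : α → ℝ) (n : ℕ) (x : α) : ℝ :=
  (range (n + 1)).sup' nonempty_range_add_one fun i => birkhoffSum T f i x

lemma birkhoffSum_le_birkhoffMax {i n : ℕ} (h : i ≤ n) (x : α) :
    birkhoffSum T f i x ≤ birkhoffMax T f n x :=
  le_sup' (fun i => birkhoffSum T f i x) (Finset.mem_range.2 (Nat.lt_succ_of_le h))

lemma birkhoffMax_nonneg (n : ℕ) (x : α) : 0 ≤ birkhoffMax T f n x := by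
  simpa using birkhoffSum_le_birkhoffMax (T := T) (f := f) n.zero_le x

lemma birkhoffMax_mono (x : α) : Monotone (birkhoffMax T f · x) := fun _ _ h =>
  sup'_mono _ (range_subset_range.2 (Nat.succ_le_succ h)) _

lemma exists_birkhoffMax_pos_iff (x : α) :
    (∃ n, 0 < birkhoffMax T f n x) ↔ ∃ n, 0 < birkhoffSum T f n x := by
  constructor
  · rintro ⟨n, hn⟩
    obtain ⟨i, -, hi⟩ := (lt_sup'_iff _).1 hn
    exact ⟨i, hi⟩
  · rintro ⟨n, hn⟩
    exact ⟨n, hn.trans_le (birkhoffSum_le_birkhoffMax le_rfl x)⟩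

lemma birkhoffMax_le_max_zero_add (n : ℕ) (x : α) :
    birkhoffMax T f n x ≤ max 0 (f x + birkhoffMax T f n (T x)) := by
  refine sup'_le _ _ fun i hi => ?_
  cases i with
  | zero => simp
  | succ i =>
    rw [birkhoffSum_succ']
    exact le_max_of_le_right <| add_le_add le_rfl
      (birkhoffSum_le_birkhoffMax (by simp only [Finset.mem_range] at hi; omega) _)

lemma norm_birkhoffMax_le {C : ℝ} (hC : ∀ x, ‖f x‖ ≤ C) (n : ℕ) (x : α) :
    ‖birkhoffMax T f n x‖ ≤ n * C := by
  have hC0 : 0 ≤ C := (norm_nonneg _).trans (hC x)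
  rw [Real.norm_of_nonneg (birkhoffMax_nonneg n x)]
  refine sup'_le _ _ fun i hi => ?_
  have hi : (i : ℝ) ≤ n := by simp only [Finset.mem_range] at hi; exact_mod_cast Nat.le_of_lt_succ hi
  calc birkhoffSum T f i x ≤ ∑ _j ∈ range i, C :=
        sum_le_sum fun j _ => (Real.le_norm_self _).trans (hC _)
    _ = i * C := by simp
    _ ≤ n * C := by gcongr

variable [MeasurableSpace α] {μ : Measure α}

lemma measurable_birkhoffSum (hT : Measurable T) (hf : Measurable f) (n : ℕ) :
    Measurable (birkhoffSum T f n) :=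
  Finset.measurable_sum _ fun i _ => hf.comp (hT.iterate i)

lemma measurable_birkhoffMax (hT : Measurable T) (hf : Measurable f) (n : ℕ) :
    Measurable (birkhoffMax T f n) :=
  Finset.measurable_range_sup'' fun i _ => measurable_birkhoffSum hT hf i

theorem MeasureTheory.MeasurePreserving.setIntegral_birkhoffMax_pos_nonneg [IsFiniteMeasure μ]
    (hT : MeasurePreserving T μ μ) (hf : Measurable f) {C : ℝ} (hC : ∀ x, ‖f x‖ ≤ C) (n : ℕ) :
    0 ≤ ∫ x in {x | 0 < birkhoffMax T f n x}, f x ∂μ := by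
  set M := birkhoffMax T f n
  set E := {x | 0 < M x}
  have hM : Measurable M := measurable_birkhoffMax hT.measurable hf n
  have hMi : Integrable M μ :=
    .of_bound hM.aestronglyMeasurable (n * C) (.of_forall (norm_birkhoffMax_le hC n))
  have hMTi : Integrable (fun x => M (T x)) μ := hT.integrable_comp_of_integrable hMi
  have hfi : Integrable f μ := .of_bound hf.aestronglyMeasurable C (.of_forall hC)
  have hle : ∫ x in E, (M x - M (T x)) ∂μ ≤ ∫ x in E, f x ∂μ :=
    setIntegral_mono_on (hMi.sub hMTi).integrableOn hfi.integrableOn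
      (measurableSet_lt measurable_const hM) fun x (hx : 0 < M x) => by
        have : M x ≤ f x + M (T x) :=
          (le_max_iff.1 (birkhoffMax_le_max_zero_add n x)).resolve_left hx.not_ge
        linarith
  have hME : ∫ x in E, M x ∂μ = ∫ x, M x ∂μ :=
    setIntegral_eq_integral_of_forall_compl_eq_zero fun x hx =>
      le_antisymm (not_lt.1 hx) (birkhoffMax_nonneg n x)
  have hMTE : ∫ x in E, M (T x) ∂μ ≤ ∫ x, M (T x) ∂μ :=
    setIntegral_le_integral hMTi (.of_forall fun x => birkhoffMax_nonneg n (T x))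
  have hMT : ∫ x, M (T x) ∂μ = ∫ x, M x ∂μ := by
    conv_rhs => rw [← hT.map_eq]
    exact (integral_map hT.measurable.aemeasurable hM.aestronglyMeasurable).symm
  rw [integral_sub hMi.integrableOn hMTi.integrableOn] at hle
  linarith

theorem MeasureTheory.MeasurePreserving.setIntegral_exists_birkhoffSum_pos_nonneg [IsFiniteMeasure μ]
    (hT : MeasurePreserving T μ μ) (hf : Measurable f) {C : ℝ} (hC : ∀ x, ‖f x‖ ≤ C) :
    0 ≤ ∫ x in {x | ∃ n, 0 < birkhoffSum T f n x}, f x ∂μ := by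
  have hU : {x | ∃ n, 0 < birkhoffSum T f n x} = ⋃ n, {x | 0 < birkhoffMax T f n x} := by
    ext x
    simp [exists_birkhoffMax_pos_iff]
  rw [hU]
  refine ge_of_tendsto' (tendsto_setIntegral_of_monotone
    (fun n => measurableSet_lt measurable_const (measurable_birkhoffMax hT.measurable hf n))
    (fun _ _ h x (hx : 0 < _) => hx.trans_le (birkhoffMax_mono x h))
    (Integrable.of_bound hf.aestronglyMeasurable C (.of_forall hC)).integrableOn)
    fun n => hT.setIntegral_birkhoffMax_pos_nonneg hf hC n

theorem Ergodic.ae_eventually_birkhoffAverage_lt [IsProbabilityMeasure μ] (hT : Ergodic T μ)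
    (hf : Measurable f) {C : ℝ} (hC : ∀ x, ‖f x‖ ≤ C) {ε : ℝ} (hε : 0 < ε) :
    ∀ᵐ x ∂μ, ∀ᶠ n in atTop, birkhoffAverage ℝ T f n x < ∫ y, f y ∂μ + ε := by
  set c := ∫ y, f y ∂μ + ε / 2
  set g := fun y => f y - c
  have hg : Measurable g := hf.sub measurable_const
  have hgC : ∀ x, ‖g x‖ ≤ C + ‖c‖ := fun x => (norm_sub_le _ _).trans (by gcongr; exact hC x)
  set E := {x | BddAbove (Set.range fun n => birkhoffSum T g n x)}
  have hE : MeasurableSet E :=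
    measurableSet_bddAbove_range (measurable_birkhoffSum hT.measurable hg)
  have hTE : T ⁻¹' E = E := Set.ext fun x => bddAbove_range_birkhoffSum_comp_iff T g x
  -- If the Birkhoff sums of `g` were a.e. unbounded, the maximal ergodic theorem would give
  -- `0 ≤ ∫ g = -ε / 2`.
  have hEae : ∀ᵐ x ∂μ, x ∈ E := by
    refine eventuallyEq_univ.1 <| (hT.ae_empty_or_univ hE hTE).resolve_left fun h => ?_
    have hpos : {x | ∃ n, 0 < birkhoffSum T g n x} =ᵐ[μ] (Set.univ : Set α) := by
      refine eventuallyEq_univ.2 ?_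
      filter_upwards [measure_eq_zero_iff_ae_notMem.1 (ae_eq_empty.1 h)] with x hx
      obtain ⟨_, ⟨n, rfl⟩, hn⟩ := not_bddAbove_iff.1 hx 0
      exact ⟨n, hn⟩
    have := hT.toMeasurePreserving.setIntegral_exists_birkhoffSum_pos_nonneg hg hgC
    rw [setIntegral_congr_set hpos, setIntegral_univ,
      integral_sub (.of_bound hf.aestronglyMeasurable C (.of_forall hC)) (integrable_const c)]
      at this
    simp [c] at this
    linarith
  filter_upwards [hEae] with x ⟨B, hB⟩
  filter_upwards [(tendsto_natCast_atTop_atTop.atTop_mul_const (half_pos hε)).eventually_gt_atTop B,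
    eventually_ge_atTop 1] with n hn hn1
  have hS : birkhoffSum T g n x ≤ B := hB ⟨n, rfl⟩
  rw [birkhoffSum_sub_const] at hS
  rw [birkhoffAverage, smul_eq_mul, inv_mul_lt_iff₀ (by positivity)]
  linarith [show (n : ℝ) * (∫ y, f y ∂μ + ε) = n * c + n * (ε / 2) by ring]

theorem Ergodic.ae_tendsto_birkhoffAverage [IsProbabilityMeasure μ] (hT : Ergodic T μ)
    (hf : Measurable f) {C : ℝ} (hC : ∀ x, ‖f x‖ ≤ C) :
    ∀ᵐ x ∂μ, Tendsto (birkhoffAverage ℝ T f · x) atTop (𝓝 (∫ y, f y ∂μ)) := by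
  have hup := fun j : ℕ => hT.ae_eventually_birkhoffAverage_lt hf hC (Nat.one_div_pos_of_nat (n := j))
  have hlow := fun j : ℕ => hT.ae_eventually_birkhoffAverage_lt hf.neg (C := C)
    (by simpa using hC) (Nat.one_div_pos_of_nat (n := j))
  filter_upwards [ae_all_iff.2 hup, ae_all_iff.2 hlow] with x hup hlow
  refine tendsto_order.2 ⟨fun b hb => ?_, fun b hb => ?_⟩
  · obtain ⟨j, hj⟩ := exists_nat_one_div_lt (sub_pos.2 hb)
    filter_upwards [hlow j] with n hn
    simp only [birkhoffAverage_neg, Pi.neg_apply, integral_neg] at hn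
    linarith
  · obtain ⟨j, hj⟩ := exists_nat_one_div_lt (sub_pos.2 hb)
    filter_upwards [hup j] with n hn
    linarith

end Birkhoff

lemma seqShift_iterate_apply (i : ℕ) (y : ℕ → ℝ) (n : ℕ) : seqShift^[i] y n = y (n + i) := by
  induction i generalizing y with
  | zero => rfl
  | succ i ih => rw [Function.iterate_succ_apply, ih]; rfl

lemma birkhoffAverage_seqShift_indicator (r : ℝ) (n : ℕ) (y : ℕ → ℝ) :
    birkhoffAverage ℝ seqShift ({z : ℕ → ℝ | z 0 ≤ r}.indicator 1) n y = empiricalCDF y n r := by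
  rw [birkhoffAverage, birkhoffSum, empiricalCDF, natCast_card_filter, smul_eq_mul, div_eq_inv_mul]
  congr 1
  refine sum_congr rfl fun i _ => ?_
  simp [Set.indicator_apply, seqShift_iterate_apply]

theorem ae_tendsto_empiricalCDF {Ω : Type*} [MeasurableSpace Ω] {μ : Measure Ω}
    [IsProbabilityMeasure μ] {X : ℕ → Ω → ℝ} (hX : ∀ n, Measurable (X n))
    (herg : Ergodic seqShift (μ.map (path X))) (r : ℝ) :
    ∀ᵐ ω ∂μ, Tendsto (empiricalCDF (path X ω) · r) atTop (𝓝 (μ.real {ω | X 0 ω ≤ r})) := by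
  have hpath : Measurable (path X) := measurable_pi_lambda _ hX
  have : IsProbabilityMeasure (μ.map (path X)) := Measure.isProbabilityMeasure_map hpath.aemeasurable
  have hs : MeasurableSet {z : ℕ → ℝ | z 0 ≤ r} :=
    measurableSet_le (measurable_pi_apply 0) measurable_const
  have h := herg.ae_tendsto_birkhoffAverage (measurable_one.indicator hs) (C := 1)
    fun y => (norm_indicator_le_norm_self (1 : (ℕ → ℝ) → ℝ) y).trans (by simp)
  rw [integral_indicator_one hs, map_measureReal_apply hpath hs] at h
  filter_upwards [ae_of_ae_map hpath.aemeasurable h] with ω hω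
  simp only [birkhoffAverage_seqShift_indicator] at hω
  exact hω

lemma measure_le_lt_one_of_rightEndpoint_eq_top {Ω : Type*} [MeasurableSpace Ω]
    {μ : Measure Ω} {X : Ω → ℝ} (h : rightEndpoint μ X = ⊤) (r : ℝ) : μ {ω | X ω ≤ r} < 1 := by
  by_contra! hr
  have : rightEndpoint μ X ≤ r := sSup_le <| by
    rintro _ ⟨s, hs, rfl⟩
    by_contra! hrs
    exact (hr.trans (measure_mono fun ω hω => hω.trans (EReal.coe_lt_coe_iff.1 hrs).le)).not_gt hs
  simp [h] at this

lemma tendsto_measureReal_le_atTop {Ω : Type*} [MeasurableSpace Ω] {μ : Measure Ω}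
    [IsProbabilityMeasure μ] {X : Ω → ℝ} (hX : Measurable X) :
    Tendsto (fun r => μ.real {ω | X ω ≤ r}) atTop (𝓝 1) := by
  have : IsProbabilityMeasure (μ.map X) := Measure.isProbabilityMeasure_map hX.aemeasurable
  convert ProbabilityTheory.tendsto_cdf_atTop (μ.map X) using 1
  ext r
  rw [ProbabilityTheory.cdf_eq_real, map_measureReal_apply hX measurableSet_Iic]
  rfl

theorem ae_tendsto_nearCount_div {Ω : Type*} [MeasurableSpace Ω] {μ : Measure Ω}
    [IsProbabilityMeasure μ] {X : ℕ → Ω → ℝ} (hX : ∀ n, Measurable (X n))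
    (herg : Ergodic seqShift (μ.map (path X))) (hsup : rightEndpoint μ (X 0) = ⊤) (a : ℝ)
    {k : ℕ → ℕ} (hk : ∀ n, 1 ≤ n → 1 ≤ k n ∧ k n ≤ n)
    (hk1 : Tendsto (fun n => (k n : ℝ) / n) atTop (𝓝 1)) :
    ∀ᵐ ω ∂μ, Tendsto (fun n => (nearCount (k n) n a (path X ω) : ℝ) / n) atTop (𝓝 0) := by
  have hF r : μ.real {ω | X 0 ω ≤ r} < 1 := ENNReal.toReal_lt_of_lt_ofReal <| by
    simpa using measure_le_lt_one_of_rightEndpoint_eq_top hsup r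
  have hup := fun m : ℕ => ae_tendsto_empiricalCDF hX herg m
  have hlow := fun m : ℕ => ae_tendsto_empiricalCDF hX herg (m - a)
  filter_upwards [ae_all_iff.2 hup, ae_all_iff.2 hlow] with ω hup hlow
  exact tendsto_nearCount_div_of_tendsto_empiricalCDF hk hk1 hF
    (tendsto_measureReal_le_atTop (hX 0)) hup hlow

theorem tendsto_comp_div_of_tendsto_div_natCast {ι : Type*} {l : Filter ι} {u : ℕ → ℝ}
    (hu : Tendsto (fun n => u n / n) atTop (𝓝 0)) {N : ι → ℕ} {c : ι → ℝ} {Z : ℝ}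
    (hZ : 0 < Z) (hc : Tendsto c l atTop) (hN : Tendsto (fun t => (N t : ℝ) / c t) l (𝓝 Z)) :
    Tendsto (fun t => u (N t) / c t) l (𝓝 0) := by
  have hNtop : Tendsto N l atTop := by
    refine tendsto_natCast_atTop_iff.1 ((hN.pos_mul_atTop hZ hc).congr' ?_)
    filter_upwards [hc.eventually_gt_atTop 0] with t ht using div_mul_cancel₀ _ ht.ne'
  have h := (hu.comp hNtop).mul hN
  rw [zero_mul] at h
  refine h.congr' ?_
  filter_upwards [hNtop.eventually_gt_atTop 0] with t ht
  have : (N t : ℝ) ≠ 0 := by positivity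
  simp only [Function.comp_apply]
  field_simp

theorem stmt19_general {Ω : Type*} [MeasurableSpace Ω] (μ : Measure Ω) [IsProbabilityMeasure μ]
    (X : ℕ → Ω → ℝ) (hX : ∀ n, Measurable (X n))
    (herg : Ergodic seqShift (Measure.map (path X) μ))
    (hsup : rightEndpoint μ (X 0) = ⊤)
    (a : ℝ)
    (k : ℕ → ℕ) (hk : ∀ n, 1 ≤ n → 1 ≤ k n ∧ k n ≤ n)
    (hk1 : Tendsto (fun n => (k n : ℝ) / n) atTop (𝓝 1))
    (N : ℝ → Ω → ℕ) (Z : Ω → ℝ) (hZ : ∀ᵐ ω ∂μ, 0 < Z ω)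
    (c : ℝ → ℝ) (hct : Tendsto c atTop atTop)
    (hNc : ∀ᵐ ω ∂μ, Tendsto (fun t => (N t ω : ℝ) / c t) atTop (𝓝 (Z ω))) :
    ∀ᵐ ω ∂μ, Tendsto
      (fun t => (nearCount (k (N t ω)) (N t ω) a (path X ω) : ℝ) / c t) atTop (𝓝 0) := by
  filter_upwards [ae_tendsto_nearCount_div hX herg hsup a hk hk1, hZ, hNc] with ω hω hZω hNω
  exact tendsto_comp_div_of_tendsto_div_natCast hω hZω hct hNω

theorem stmt19 {Ω : Type*} [MeasurableSpace Ω] (μ : Measure Ω) [IsProbabilityMeasure μ]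
    (X : ℕ → Ω → ℝ) (hX : ∀ n, Measurable (X n))
    (herg : Ergodic seqShift (Measure.map (path X) μ))
    (hsup : rightEndpoint μ (X 0) = ⊤)
    (a : ℝ) (ha : 0 < a)
    (k : ℕ → ℕ) (hk : ∀ n, 1 ≤ n → 1 ≤ k n ∧ k n ≤ n)
    (hk1 : Tendsto (fun n => (k n : ℝ) / n) atTop (𝓝 1))
    (N : ℝ → Ω → ℕ) (Z : Ω → ℝ) (hZ : ∀ᵐ ω ∂μ, 0 < Z ω)
    (c : ℝ → ℝ) (hc : ∀ t, 0 < c t) (hct : Tendsto c atTop atTop)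
    (hNc : ∀ᵐ ω ∂μ, Tendsto (fun t => (N t ω : ℝ) / c t) atTop (𝓝 (Z ω))) :
    ∀ᵐ ω ∂μ, Tendsto
      (fun t => (nearCount (k (N t ω)) (N t ω) a (path X ω) : ℝ) / c t) atTop (𝓝 0) :=
  stmt19_general μ X hX herg hsup a k hk hk1 N Z hZ c hct hNc
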